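/- Let G be a directed graph with nonnegative rational arc weights, let s1 ≠ s2 be vertices and α1, α2 ∈ ℚ≥0. Let δ+(s2) denote the set of out-neighbors of s2, let G′ be the graph obtained from G by deleting all arcs leaving s2, and for v ∈ δ+(s2) let G − s2 be the graph obtained by deleting s2 and all arcs incident to it. Then the set P_{α1,α2}(s1,s2,G) of all pairs of compatible paths for s1 and s2 with bounds α1, α2 in G equals the union of: (a) P_{α1,α2}(s1,s2,G′), and (b) for each v ∈ δ+(s2) with w(s2,v) ≤ α2, the set of pairs obtained from the pairs (p1,p2) in P_{α1, α2−w(s2,v)}(s1,v,G−s2) by prepending the arc (s2,v) to p2. -/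

import Mathlib

/-- `l` is a simple path (no repeated vertices) from `x` to `y` in the directed
graph with vertex set `S` and arc relation `A`, given as its list of vertices. -/
def IsPathOn {V : Type*} (S : Set V) (A : V → V → Prop) (x y : V) (l : List V) : Prop :=
  (∀ v ∈ l, v ∈ S) ∧ l.Chain' A ∧ l.Nodup ∧ l.head? = some x ∧ l.getLast? = some y

/-- The length of a path (given by its vertex list) w.r.t. arc weights `w`:
the sum of the weights of its arcs. -/
def pathLen {V : Type*} (w : V → V → ℚ) (l : List V) : ℚ :=
  ((l.zip l.tail).map fun p => w p.1 p.2).sum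

/-- `P_{β1,β2}(x,y,(S,A))`: the set of pairs of compatible paths for sources
`x` and `y` with bounds `β1, β2` in the graph with vertex set `S` and arcs `A`:
pairs of paths `p1 : x ⇝ t`, `p2 : y ⇝ t` ending at a common vertex `t`,
sharing no vertex other than `t`, with `|p1| ≤ β1` and `|p2| ≤ β2`. -/
def CompatPairs {V : Type*} (S : Set V) (A : V → V → Prop) (w : V → V → ℚ)
    (x y : V) (β1 β2 : ℚ) : Set (List V × List V) :=
  {q | ∃ t : V, IsPathOn S A x t q.1 ∧ IsPathOn S A y t q.2 ∧
       (∀ v, v ∈ q.1 → v ∈ q.2 → v = t) ∧ pathLen w q.1 ≤ β1 ∧ pathLen w q.2 ≤ β2}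

/-!
A pair of compatible paths `(p₁, p₂)` with `p₂` starting at `s₂` either has `p₂` trivial, in which
case `p₁` ends at `s₂` and, being simple, never leaves it, so the pair lives in `G'`; or `p₂`
starts with an arc `(s₂, v)`. In the second case `s₂` is not the common endpoint (as `p₂` is
simple), hence lies on neither `p₁` nor the rest of `p₂`, and nonnegativity of the weights
gives `w(s₂,v) ≤ α₂`. The converse inclusions are immediate.
-/

open List

section Paths

variable {V : Type*} {S S' : Set V} {A A' : V → V → Prop} {w : V → V → ℚ} {x y t : V}

lemma List.IsChain.and_ne_of_getLast? {R : V → V → Prop} :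
    ∀ {l : List V}, l.Nodup → l.getLast? = some t → l.IsChain R →
      l.IsChain (fun u v => R u v ∧ u ≠ t)
  | [], _, _, _ => isChain_nil
  | [a], _, _, _ => isChain_singleton a
  | a :: b :: l, hnd, hlast, hch => by
      rw [getLast?_cons_cons] at hlast
      rw [isChain_cons_cons] at hch ⊢
      rw [nodup_cons] at hnd
      exact ⟨⟨hch.1, fun hat => hnd.1 (hat ▸ mem_of_getLast? hlast)⟩,
        IsChain.and_ne_of_getLast? hnd.2 hlast hch.2⟩

lemma IsPathOn.mono (hS : S ⊆ S') (hA : ∀ u v, A u v → A' u v) {l : List V}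
    (h : IsPathOn S A x y l) : IsPathOn S' A' x y l :=
  ⟨fun v hv => hS (h.1 v hv), IsChain.imp (fun u v => hA u v) h.2.1, h.2.2⟩

lemma IsPathOn.and_ne_end {l : List V} (h : IsPathOn S A x t l) :
    IsPathOn S (fun u v => A u v ∧ u ≠ t) x t l :=
  ⟨h.1, h.2.1.and_ne_of_getLast? h.2.2.1 h.2.2.2.2, h.2.2⟩

lemma IsPathOn.exists_eq_cons {l : List V} (h : IsPathOn S A x y l) : ∃ l', l = x :: l' :=
  head?_eq_some_iff.1 h.2.2.2.1

lemma isPathOn_cons_cons_iff {v : V} {l : List V} :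
    IsPathOn S A x t (x :: v :: l) ↔ x ∈ S ∧ A x v ∧ x ∉ v :: l ∧ IsPathOn S A v t (v :: l) := by
  constructor
  · rintro ⟨hS, hch, hnd, -, hlast⟩
    obtain ⟨hA, hch⟩ := isChain_cons_cons.1 hch
    obtain ⟨hx, hnd⟩ := nodup_cons.1 hnd
    exact ⟨hS x mem_cons_self, hA, hx, fun u hu => hS u (mem_cons_of_mem _ hu), hch, hnd, rfl,
      hlast⟩
  · rintro ⟨hxS, hA, hx, hS, hch, hnd, -, hlast⟩
    exact ⟨forall_mem_cons.2 ⟨hxS, hS⟩, isChain_cons_cons.2 ⟨hA, hch⟩, nodup_cons.2 ⟨hx, hnd⟩,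
      rfl, hlast⟩

lemma pathLen_cons_cons (w : V → V → ℚ) (a b : V) (l : List V) :
    pathLen w (a :: b :: l) = w a b + pathLen w (b :: l) := by
  simp [pathLen]

lemma pathLen_nonneg (hw : ∀ u v, A u v → 0 ≤ w u v) :
    ∀ {l : List V}, l.IsChain A → 0 ≤ pathLen w l
  | [], _ => le_rfl
  | [_], _ => le_rfl
  | a :: b :: l, h => by
      rw [isChain_cons_cons] at h
      rw [pathLen_cons_cons]
      exact add_nonneg (hw _ _ h.1) (pathLen_nonneg hw h.2)

end Paths

section CompatPairs

variable {V : Type*} {S S' : Set V} {A A' : V → V → Prop} {w : V → V → ℚ} {x y : V}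
  {β1 β2 : ℚ}

lemma compatPairs_mono (hS : S ⊆ S') (hA : ∀ u v, A u v → A' u v) :
    CompatPairs S A w x y β1 β2 ⊆ CompatPairs S' A' w x y β1 β2 :=
  fun _ ⟨t, hp1, hp2, hd, hl1, hl2⟩ => ⟨t, hp1.mono hS hA, hp2.mono hS hA, hd, hl1, hl2⟩

lemma exists_eq_cons_of_mem_compatPairs {q : List V × List V}
    (h : q ∈ CompatPairs S A w x y β1 β2) : ∃ l, q.2 = y :: l :=
  let ⟨_, _, hp2, _⟩ := h
  hp2.exists_eq_cons

lemma mem_compatPairs_and_ne_of_mem_singleton {p1 : List V}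
    (h : (p1, [y]) ∈ CompatPairs S A w x y β1 β2) :
    (p1, [y]) ∈ CompatPairs S (fun u v => A u v ∧ u ≠ y) w x y β1 β2 := by
  obtain ⟨t, hp1, hp2, hd, hl1, hl2⟩ := h
  obtain rfl : t = y := by simpa using hp2.2.2.2.2.symm
  exact ⟨t, hp1.and_ne_end, ⟨hp2.1, isChain_singleton _, hp2.2.2⟩, hd, hl1, hl2⟩

lemma mem_compatPairs_cons_cons_iff (hw : ∀ u v, A u v → 0 ≤ w u v) {p1 l : List V} {v : V} :
    (p1, y :: v :: l) ∈ CompatPairs Set.univ A w x y β1 β2 ↔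
      A y v ∧ w y v ≤ β2 ∧ (p1, v :: l) ∈ CompatPairs {u | u ≠ y} A w x v β1 (β2 - w y v) := by
  constructor
  · rintro ⟨t, hp1, hp2, hd, hl1, hl2⟩
    obtain ⟨-, hA, hy, hp2⟩ := isPathOn_cons_cons_iff.1 hp2
    have hty : t ≠ y := fun h => hy (h ▸ mem_of_getLast? hp2.2.2.2.2)
    have hrest : 0 ≤ pathLen w (v :: l) := pathLen_nonneg hw hp2.2.1
    rw [pathLen_cons_cons] at hl2
    refine ⟨hA, by linarith, t, ⟨fun u hu huy => hty ?_, hp1.2⟩,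
      ⟨fun u hu huy => hy (huy ▸ hu), hp2.2⟩, fun u h1 h2 => hd u h1 (mem_cons_of_mem _ h2),
      hl1, by linarith⟩
    exact (hd u hu (huy ▸ mem_cons_self)).symm.trans huy
  · rintro ⟨hA, -, t, hp1, hp2, hd, hl1, hl2⟩
    refine ⟨t, hp1.mono (Set.subset_univ _) fun _ _ => id,
      isPathOn_cons_cons_iff.2 ⟨trivial, hA, fun h => hp2.1 y h rfl,
        hp2.mono (Set.subset_univ _) fun _ _ => id⟩, ?_, hl1, ?_⟩
    · rintro u h1 (_ | ⟨_, h2⟩)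
      · exact absurd rfl (hp1.1 _ h1)
      · exact hd u h1 h2
    · rw [pathLen_cons_cons]
      linarith

end CompatPairs

theorem stmt2_general {V : Type*} (A : V → V → Prop) (w : V → V → ℚ)
    (hw : ∀ u v, A u v → 0 ≤ w u v)
    (s1 s2 : V) (α1 α2 : ℚ) :
    CompatPairs Set.univ A w s1 s2 α1 α2 =
      CompatPairs Set.univ (fun u v => A u v ∧ u ≠ s2) w s1 s2 α1 α2 ∪
        ⋃ v ∈ {v : V | A s2 v ∧ w s2 v ≤ α2},
          (fun q : List V × List V => (q.1, s2 :: q.2)) ''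
            CompatPairs {x : V | x ≠ s2} A w s1 v α1 (α2 - w s2 v) := by
  ext ⟨p1, p2⟩
  simp only [Set.mem_union, Set.mem_iUnion, Set.mem_image, Set.mem_ofPred_eq, exists_prop,
    Prod.exists, Prod.mk.injEq]
  constructor
  · intro h
    obtain ⟨_ | ⟨v, l⟩, rfl⟩ := exists_eq_cons_of_mem_compatPairs h
    · exact Or.inl (mem_compatPairs_and_ne_of_mem_singleton h)
    · obtain ⟨hA, hwv, h⟩ := (mem_compatPairs_cons_cons_iff hw).1 h
      exact Or.inr ⟨v, ⟨hA, hwv⟩, p1, v :: l, h, rfl, rfl⟩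
  · rintro (h | ⟨v, ⟨hA, hwv⟩, q1, q2, h, rfl, rfl⟩)
    · exact compatPairs_mono subset_rfl (fun _ _ => And.left) h
    · obtain ⟨l, rfl⟩ := exists_eq_cons_of_mem_compatPairs h
      exact (mem_compatPairs_cons_cons_iff hw).2 ⟨hA, hwv, h⟩

/-- `P_{α1,α2}(s1,s2,G)` is the union of `P_{α1,α2}(s1,s2,G')` (where `G'` is
`G` minus all arcs leaving `s2`) and, for each out-neighbor `v` of `s2` with
`w(s2,v) ≤ α2`, the image of `P_{α1,α2 - w(s2,v)}(s1,v,G - s2)` under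
prepending the arc `(s2,v)` to the second path. -/
theorem stmt2 {V : Type*} (A : V → V → Prop) (w : V → V → ℚ)
    (hw : ∀ u v, A u v → 0 ≤ w u v)
    (s1 s2 : V) (hs : s1 ≠ s2) (α1 α2 : ℚ) (hα1 : 0 ≤ α1) (hα2 : 0 ≤ α2) :
    CompatPairs Set.univ A w s1 s2 α1 α2 =
      CompatPairs Set.univ (fun u v => A u v ∧ u ≠ s2) w s1 s2 α1 α2 ∪
        ⋃ v ∈ {v : V | A s2 v ∧ w s2 v ≤ α2},
          (fun q : List V × List V => (q.1, s2 :: q.2)) ''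
            CompatPairs {x : V | x ≠ s2} A w s1 v α1 (α2 - w s2 v) :=
  stmt2_general A w hw s1 s2 α1 α2
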